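/- arXiv:2006.07999 — 8 statements merged into one kernel-verified Lean document; each statement's English description precedes it below -/
import Mathlib

section
/- Let k > 0 be a real number with 0.558·ln k ≥ 1, set L = ⌊0.558·ln k⌋, and let n > 0 be real. For every a ∈ Poly(L): (i) if n/k ≤ 6.5·L and 6.5·L ≤ n, then sup_{λ ∈ [n/k, n]} g(a,λ) = sup_{λ ∈ [n/k, 6.5·L]} g(a,λ); and (ii) if n/k > 6.5·L, then sup_{λ ∈ [n/k, n]} g(a,λ) = g(a, n/k). -/
/-!
For `λ ≥ 6.5 L` the function `g(a, ·)` is nonincreasing, which gives both claims.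
With `w_l = λ^l - l λ^(l-1)` one has `g' = -e^{-λ} (D / k + 2 e^{-λ} P Q)`, where
`D = ∑ a_l² l! w_l`, `P = ∑ a_l λ^l` and `Q = ∑ a_l w_l`. Since `l ≤ q λ` with `q = 2/13`,
each `w_l ≥ (1 - q) λ^l`, and two Cauchy–Schwarz inequalities (the second one against the
telescoping sum `∑ w_l / l! = λ^L / L!`) give `(1 - q) |P Q| ≤ D λ^L / L!`. So `g' ≤ 0` as
soon as `2 k e^{-λ} λ^L / L! ≤ 1 - q`, and this follows from `k ≤ e^{(L+1)/0.558}`, the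
monotonicity of `e^{-λ} λ^L` on `[L, ∞)` and `L^L / L! ≤ e^{L-1}`.
-/

open Real Finset

/-- The objective function `g(a, λ)` of the regularized weighted Chebyshev problem. -/
noncomputable def gObj {L : ℕ} (k : ℝ) (a : Fin (L + 1) → ℝ) (lam : ℝ) : ℝ :=
  (1 / k) * ∑ l : Fin (L + 1), Real.exp (-lam) * (a l) ^ 2 * lam ^ (l : ℕ) * (Nat.factorial (l : ℕ) : ℝ) +
    (Real.exp (-lam) * ∑ l : Fin (L + 1), a l * lam ^ (l : ℕ)) ^ 2

open scoped Nat

lemma exp_neg_mul_pow_le_of_le {l : ℕ} {x y : ℝ} (hy : 0 < y) (hly : (l : ℝ) ≤ y)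
    (hyx : y ≤ x) : exp (-x) * x ^ l ≤ exp (-y) * y ^ l := by
  set u := x / y - 1
  have hu : 0 ≤ u := by rw [sub_nonneg, le_div_iff₀ hy]; linarith
  have hx : x = y * (1 + u) := by simp only [u]; field_simp; ring
  calc exp (-x) * x ^ l = exp (-x) * y ^ l * (1 + u) ^ l := by rw [hx, mul_pow]; ring
    _ ≤ exp (-x) * y ^ l * exp (u * y) := by
        gcongr
        calc (1 + u) ^ l ≤ exp u ^ l := by gcongr; linarith [add_one_le_exp u]
          _ = exp (u * l) := by rw [← exp_nat_mul, mul_comm]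
          _ ≤ exp (u * y) := by gcongr
    _ = exp (-y) * y ^ l := by
        rw [mul_right_comm, ← exp_add]
        congr 2
        rw [hx]; ring

lemma pow_self_div_factorial_le_exp {n : ℕ} (hn : 1 ≤ n) :
    (n : ℝ) ^ n / n ! ≤ exp (n - 1) := by
  induction n, hn using Nat.le_induction with
  | base => simp
  | succ n hn ih =>
    have hn0 : (n : ℝ) ≠ 0 := by positivity
    calc ((n + 1 : ℕ) : ℝ) ^ (n + 1) / (n + 1)!
        = (n : ℝ) ^ n / n ! * (1 + (n : ℝ)⁻¹) ^ n := by
          rw [Nat.factorial_succ, show 1 + (n : ℝ)⁻¹ = (n + 1) / n by field_simp, div_pow]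
          push_cast
          field_simp
          ring
      _ ≤ exp (n - 1) * exp 1 := by gcongr; exact one_add_inv_pow_le_exp
      _ = exp ((n + 1 : ℕ) - 1) := by rw [← exp_add]; push_cast; ring_nf

-- `(exp (-x) * x ^ l)' = -exp (-x) * powSubDeriv l x`
def powSubDeriv (l : ℕ) (x : ℝ) : ℝ := x ^ l - l * x ^ (l - 1)

theorem hasDerivAt_exp_neg_mul_pow (l : ℕ) (x : ℝ) :
    HasDerivAt (fun t => exp (-t) * t ^ l) (-(exp (-x) * powSubDeriv l x)) x :=
  (((hasDerivAt_neg x).exp).mul (hasDerivAt_pow l x)).congr_deriv (by rw [powSubDeriv]; ring)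

lemma sub_mul_pow_le_powSubDeriv {l : ℕ} {q x : ℝ} (hq : 0 ≤ q) (hx : 0 ≤ x)
    (hl : (l : ℝ) ≤ q * x) : (1 - q) * x ^ l ≤ powSubDeriv l x := by
  rw [powSubDeriv]
  cases l with
  | zero => simp [hq]
  | succ l =>
    rw [Nat.add_sub_cancel, pow_succ]
    nlinarith [mul_le_mul_of_nonneg_left hl (pow_nonneg hx l)]

lemma sum_range_powSubDeriv_div_factorial (L : ℕ) (x : ℝ) :
    ∑ l ∈ range (L + 1), powSubDeriv l x / l ! = x ^ L / L ! := by
  induction L with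
  | zero => simp [powSubDeriv]
  | succ L ih =>
    rw [sum_range_succ, ih, powSubDeriv, Nat.factorial_succ, Nat.add_sub_cancel]
    push_cast
    field_simp
    ring

lemma sub_mul_sum_range_pow_div_factorial_le {L : ℕ} {q x : ℝ} (hq : 0 ≤ q)
    (hL : (L : ℝ) ≤ q * x) :
    (1 - q) * ∑ l ∈ range (L + 1), x ^ l / l ! ≤ x ^ L / L ! := by
  have hstep : ∀ l ∈ range L, x ^ l / l ! ≤ q * (x ^ (l + 1) / (l + 1)!) := by
    intro l hl
    have hlL : ((l + 1 : ℕ) : ℝ) ≤ q * x := le_trans (by exact_mod_cast mem_range.1 hl) hL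
    rw [Nat.factorial_succ, pow_succ]
    push_cast at hlL ⊢
    have hx : 0 < x := pos_of_mul_pos_right (by linarith) hq
    rw [show q * (x ^ l * x / ((l + 1) * l !)) = x ^ l / l ! * (q * x / (l + 1)) by
      field_simp]
    exact le_mul_of_one_le_right (by positivity) ((one_le_div (by positivity)).2 hlL)
  have h := sum_le_sum hstep
  rw [← mul_sum] at h
  have hS := sum_range_succ (fun l => x ^ l / l !) L
  have hS' := sum_range_succ' (fun l => x ^ l / l !) L
  simp only [pow_zero, Nat.factorial_zero, Nat.cast_one, div_one] at hS'
  nlinarith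

lemma gObj_eq {L : ℕ} (k : ℝ) (a : Fin (L + 1) → ℝ) :
    gObj k a = fun x => (∑ l, a l ^ 2 * (l : ℕ)! * (exp (-x) * x ^ (l : ℕ))) / k +
      (∑ l, a l * (exp (-x) * x ^ (l : ℕ))) ^ 2 := by
  ext x
  simp only [gObj, mul_sum, sum_div]
  congr 1
  · exact sum_congr rfl fun l _ => by ring
  · congr 1
    exact sum_congr rfl fun l _ => by ring

lemma hasDerivAt_gObj {L : ℕ} (k : ℝ) (a : Fin (L + 1) → ℝ) (x : ℝ) :
    HasDerivAt (gObj k a)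
      (-exp (-x) * ((∑ l, a l ^ 2 * (l : ℕ)! * powSubDeriv l x) / k +
        2 * exp (-x) * (∑ l, a l * x ^ (l : ℕ)) * ∑ l, a l * powSubDeriv l x)) x := by
  rw [gObj_eq]
  have hA := (HasDerivAt.fun_sum (u := univ) fun (l : Fin (L + 1)) _ =>
    (hasDerivAt_exp_neg_mul_pow l x).const_mul (a l ^ 2 * (l : ℕ)!)).div_const k
  have hP := HasDerivAt.fun_sum (u := univ) fun (l : Fin (L + 1)) _ =>
    (hasDerivAt_exp_neg_mul_pow l x).const_mul (a l)
  refine (hA.add (hP.pow 2)).congr_deriv ?_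
  simp only [mul_neg, sum_neg_distrib, mul_left_comm _ (rexp (-x)), ← mul_sum]
  ring

lemma powSubDeriv_nonneg {l : ℕ} {x : ℝ} (hx : 0 ≤ x) (hl : (l : ℝ) ≤ x) :
    0 ≤ powSubDeriv l x := by
  simpa using sub_mul_pow_le_powSubDeriv zero_le_one hx (by simpa using hl)

lemma sq_sum_mul_powSubDeriv_le {L : ℕ} (a : Fin (L + 1) → ℝ) {x : ℝ} (hx : 0 ≤ x)
    (hLx : (L : ℝ) ≤ x) :
    (∑ l, a l * powSubDeriv l x) ^ 2 ≤
      (∑ l, a l ^ 2 * (l : ℕ)! * powSubDeriv l x) * (x ^ L / L !) := by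
  have hw : ∀ l : Fin (L + 1), 0 ≤ powSubDeriv l x := fun l =>
    powSubDeriv_nonneg hx (le_trans (Nat.cast_le.2 l.is_le) hLx)
  have h := sum_sq_le_sum_mul_sum_of_sq_le_mul univ (r := fun l => a l * powSubDeriv l x)
    (f := fun l => a l ^ 2 * (l : ℕ)! * powSubDeriv l x)
    (g := fun l : Fin (L + 1) => powSubDeriv l x / (l : ℕ)!)
    (fun l _ => mul_nonneg (by positivity) (hw l)) (fun l _ => div_nonneg (hw l) (by positivity))
    fun l _ => le_of_eq (by field_simp)
  rwa [Fin.sum_univ_eq_sum_range (fun l => powSubDeriv l x / l !),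
    sum_range_powSubDeriv_div_factorial] at h

lemma sq_mul_sq_sum_mul_pow_le {L : ℕ} (a : Fin (L + 1) → ℝ) {q x : ℝ} (hq0 : 0 ≤ q)
    (hq1 : q ≤ 1) (hx : 0 ≤ x) (hLx : (L : ℝ) ≤ q * x) :
    (1 - q) ^ 2 * (∑ l, a l * x ^ (l : ℕ)) ^ 2 ≤
      (∑ l, a l ^ 2 * (l : ℕ)! * powSubDeriv l x) * (x ^ L / L !) := by
  set A := ∑ l : Fin (L + 1), a l ^ 2 * (l : ℕ)! * x ^ (l : ℕ)
  set C := ∑ l : Fin (L + 1), x ^ (l : ℕ) / (l : ℕ)!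
  have hAD : (1 - q) * A ≤ ∑ l, a l ^ 2 * (l : ℕ)! * powSubDeriv l x := by
    rw [mul_sum]
    refine sum_le_sum fun l _ => ?_
    linear_combination (a l ^ 2 * (l : ℕ)!) *
      sub_mul_pow_le_powSubDeriv hq0 hx (le_trans (Nat.cast_le.2 l.is_le) hLx)
  have hCt : (1 - q) * C ≤ x ^ L / L ! := by
    simpa only [C, Fin.sum_univ_eq_sum_range (fun l => x ^ l / l !)]
      using sub_mul_sum_range_pow_div_factorial_le hq0 hLx
  have hP : (∑ l, a l * x ^ (l : ℕ)) ^ 2 ≤ A * C :=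
    sum_sq_le_sum_mul_sum_of_sq_le_mul _ (fun l _ => by positivity) (fun l _ => by positivity)
      fun l _ => le_of_eq (by field_simp)
  have hq : 0 ≤ 1 - q := by linarith
  calc (1 - q) ^ 2 * (∑ l, a l * x ^ (l : ℕ)) ^ 2 ≤ (1 - q) ^ 2 * (A * C) := by gcongr
    _ = (1 - q) * A * ((1 - q) * C) := by ring
    _ ≤ _ := mul_le_mul hAD hCt (by positivity) (hAD.trans' (by positivity))

lemma continuous_gObj {L : ℕ} (k : ℝ) (a : Fin (L + 1) → ℝ) : Continuous (gObj k a) :=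
  continuous_iff_continuousAt.2 fun x => (hasDerivAt_gObj k a x).continuousAt

lemma deriv_gObj_nonpos {L : ℕ} {k q x : ℝ} (a : Fin (L + 1) → ℝ) (hk : 0 < k)
    (hq0 : 0 ≤ q) (hq1 : q < 1) (hx : 0 ≤ x) (hLx : (L : ℝ) ≤ q * x)
    (hkx : 2 * k * (exp (-x) * (x ^ L / L !)) ≤ 1 - q) : deriv (gObj k a) x ≤ 0 := by
  rw [(hasDerivAt_gObj k a x).deriv]
  have hP := sq_mul_sq_sum_mul_pow_le a hq0 hq1.le hx hLx
  have hLx' : (L : ℝ) ≤ x := hLx.trans (by nlinarith)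
  have hQ := sq_sum_mul_powSubDeriv_le a hx hLx'
  set E := exp (-x)
  set P := ∑ l, a l * x ^ (l : ℕ)
  set Q := ∑ l, a l * powSubDeriv l x
  set D := ∑ l, a l ^ 2 * (l : ℕ)! * powSubDeriv l x
  set t := (x ^ L / L !)
  have hD : 0 ≤ D := sum_nonneg fun l _ => mul_nonneg (by positivity)
    (powSubDeriv_nonneg hx (le_trans (Nat.cast_le.2 l.is_le) hLx'))
  -- `(1 - q) |2 E P Q| ≤ 2 E t D ≤ (1 - q) D / k`, compared through squares
  have key : (1 - q) ^ 2 * (2 * E * P * Q) ^ 2 ≤ (1 - q) ^ 2 * (D / k) ^ 2 :=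
    calc (1 - q) ^ 2 * (2 * E * P * Q) ^ 2 = 4 * E ^ 2 * ((1 - q) ^ 2 * P ^ 2) * Q ^ 2 := by ring
      _ ≤ 4 * E ^ 2 * (D * t) * (D * t) := by
          have hDt : 0 ≤ D * t := mul_nonneg hD (by positivity)
          gcongr
      _ = (D * (2 * k * (E * t)) / k) ^ 2 := by field_simp; ring
      _ ≤ (D * (1 - q) / k) ^ 2 := by gcongr
      _ = (1 - q) ^ 2 * (D / k) ^ 2 := by ring
  have hPQ := neg_le_of_abs_le (abs_le_of_sq_le_sq (le_of_mul_le_mul_left key (by nlinarith))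
    (by positivity))
  exact mul_nonpos_of_nonpos_of_nonneg (neg_nonpos.2 (exp_pos _).le) (by linarith)

lemma two_mul_exp_neg_mul_pow_div_factorial_le {L : ℕ} (hL : 1 ≤ L) {k x : ℝ}
    (hk : k ≤ exp ((L + 1) / 0.558)) (hx : 6.5 * L ≤ x) :
    2 * k * (exp (-x) * (x ^ L / L !)) ≤ 1 - 2 / 13 := by
  have hL' : (1 : ℝ) ≤ L := by exact_mod_cast hL
  -- the bound obtained below is `2 e^{1/0.558 - 1} r^L` with `r < 1`, so `L = 1` is the worst case
  set r : ℝ := 6.5 * exp (1 / 0.558 - 5.5)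
  have hr : r ≤ 1 := by
    have h := quadratic_le_exp_of_nonneg (by norm_num : (0 : ℝ) ≤ 2069 / 558)
    rw [show r = 6.5 / exp (2069 / 558) by rw [div_eq_mul_inv, ← exp_neg]; norm_num [r],
      div_le_one (exp_pos _)]
    linarith
  have hdecay : exp (-x) * (x ^ L / L !) ≤ exp (-(6.5 * L)) * ((6.5 * L) ^ L / L !) := by
    rw [← mul_div_assoc, ← mul_div_assoc]
    exact div_le_div_of_nonneg_right (exp_neg_mul_pow_le_of_le (by positivity) (by linarith) hx)
      (by positivity)
  have hfactorial : (6.5 * L : ℝ) ^ L / L ! ≤ 6.5 ^ L * exp (L - 1) := by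
    rw [mul_pow, mul_div_assoc]
    gcongr
    exact pow_self_div_factorial_le_exp hL
  have hnum : 13 * exp (-(1627 / 558)) ≤ 1 - 2 / 13 := by
    have h := sum_le_exp_of_nonneg (by norm_num : (0 : ℝ) ≤ 1627 / 558) 6
    norm_num [sum_range_succ, Nat.factorial] at h
    rw [exp_neg, ← div_eq_mul_inv, div_le_iff₀ (exp_pos _)]
    linarith
  calc 2 * k * (exp (-x) * (x ^ L / L !))
      ≤ 2 * exp ((L + 1) / 0.558) * (exp (-(6.5 * L)) * (6.5 ^ L * exp (L - 1))) := by
        have hx0 : 0 ≤ x := by linarith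
        exact mul_le_mul (by gcongr) (hdecay.trans (by gcongr)) (by positivity) (by positivity)
    _ = 2 * exp (1 / 0.558 - 1) * r ^ L := by
        rw [mul_pow, ← exp_nat_mul, show ((L + 1) / 0.558 : ℝ) = (1 / 0.558 - 1) +
          L * (1 / 0.558 - 5.5) + 6.5 * L - (L - 1) by ring, exp_sub, exp_add, exp_add, exp_neg]
        field_simp
    _ ≤ 2 * exp (1 / 0.558 - 1) * r := by
        gcongr
        exact pow_le_of_le_one (by positivity) hr (by omega)
    _ = 13 * exp (-(1627 / 558)) := by
        rw [show 13 * exp (-(1627 / 558)) = 2 * 6.5 * exp (1 / 0.558 - 1 + (1 / 0.558 - 5.5)) by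
          norm_num, exp_add]
        ring
    _ ≤ 1 - 2 / 13 := hnum

lemma antitoneOn_gObj {L : ℕ} (hL : 1 ≤ L) {k : ℝ} (hk0 : 0 < k)
    (hk : k ≤ exp ((L + 1) / 0.558)) (a : Fin (L + 1) → ℝ) :
    AntitoneOn (gObj k a) (Set.Ici (6.5 * L)) := by
  refine antitoneOn_of_deriv_nonpos (convex_Ici _) (continuous_gObj k a).continuousOn
    (fun x _ => (hasDerivAt_gObj k a x).differentiableAt.differentiableWithinAt) fun x hx => ?_
  rw [interior_Ici, Set.mem_Ioi] at hx
  have hL0 : (0 : ℝ) ≤ L := L.cast_nonneg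
  exact deriv_gObj_nonpos a hk0 (by norm_num) (by norm_num) (by linarith) (by linarith)
    (two_mul_exp_neg_mul_pow_div_factorial_le hL hk hx.le)

theorem sSup_image_Icc_eq_of_antitoneOn {α β : Type*} [ConditionallyCompleteLinearOrder α]
    [TopologicalSpace α] [OrderTopology α] [ConditionallyCompleteLinearOrder β]
    [TopologicalSpace β] [OrderClosedTopology β] {f : α → β} {a b c : α}
    (hf : ContinuousOn f (Set.Icc a b)) (hanti : AntitoneOn f (Set.Icc c b)) (hac : a ≤ c)
    (hcb : c ≤ b) :
    sSup (f '' Set.Icc a b) = sSup (f '' Set.Icc a c) := by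
  have hbdd : ∀ d ≤ b, BddAbove (f '' Set.Icc a d) := fun d hd =>
    (isCompact_Icc.image_of_continuousOn (hf.mono (Set.Icc_subset_Icc_right hd))).bddAbove
  rw [← Set.Icc_union_Icc_eq_Icc hac hcb, Set.image_union,
    csSup_union (hbdd c hcb) ((Set.nonempty_Icc.2 hac).image f)
      ((isCompact_Icc.image_of_continuousOn (hf.mono (Set.Icc_subset_Icc_left hac))).bddAbove)
      ((Set.nonempty_Icc.2 hcb).image f),
    (hanti.map_isLeast (isLeast_Icc hcb)).csSup_eq]
  exact sup_eq_left.2 (le_csSup (hbdd c hcb) (Set.mem_image_of_mem f ⟨hac, le_rfl⟩))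

theorem stmt_0_general (k : ℝ) (hk : 0 < k) (hlog : 1 ≤ 0.558 * Real.log k)
    (L : ℕ) (hL : L = ⌊0.558 * Real.log k⌋₊)
    (n : ℝ) (a : Fin (L + 1) → ℝ) :
    (n / k ≤ 6.5 * L → 6.5 * L ≤ n →
      sSup (gObj k a '' Set.Icc (n / k) n) = sSup (gObj k a '' Set.Icc (n / k) (6.5 * L))) ∧
    (n / k > 6.5 * L →
      sSup (gObj k a '' Set.Icc (n / k) n) = gObj k a (n / k)) := by
  have hL1 : 1 ≤ L := hL ▸ Nat.le_floor (by exact_mod_cast hlog)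
  have hkL : k ≤ exp ((L + 1) / 0.558) := by
    have h : 0.558 * log k < L + 1 := hL ▸ Nat.lt_floor_add_one _
    rw [← exp_log hk, exp_le_exp, le_div_iff₀ (by norm_num)]
    linarith
  have hk1 : 1 ≤ k := ((log_pos_iff hk.le).1 (by linarith)).le
  have hanti := antitoneOn_gObj hL1 hk hkL a
  refine ⟨fun h1 h2 => sSup_image_Icc_eq_of_antitoneOn (continuous_gObj k a).continuousOn
    (hanti.mono Set.Icc_subset_Ici_self) h1 h2, fun h => ?_⟩
  have hn : 0 < n := (div_pos_iff_of_pos_right hk).1 (lt_of_le_of_lt (by positivity) h)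
  exact ((hanti.mono fun x hx => h.le.trans hx.1).map_isLeast
    (isLeast_Icc (div_le_self hn.le hk1))).csSup_eq

theorem stmt_0 (k : ℝ) (hk : 0 < k) (hlog : 1 ≤ 0.558 * Real.log k)
    (L : ℕ) (hL : L = ⌊0.558 * Real.log k⌋₊)
    (n : ℝ) (hn : 0 < n) (a : Fin (L + 1) → ℝ) (ha : a 0 = -1) :
    (n / k ≤ 6.5 * L → 6.5 * L ≤ n →
      sSup (gObj k a '' Set.Icc (n / k) n) = sSup (gObj k a '' Set.Icc (n / k) (6.5 * L))) ∧
    (n / k > 6.5 * L →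
      sSup (gObj k a '' Set.Icc (n / k) n) = gObj k a (n / k)) :=
  stmt_0_general k hk hlog L hL n a
end

section
/- Let k > 0 be a real number with 0.558·ln k ≥ 1 and set L = ⌊0.558·ln k⌋. For every real λ ≥ 6.5·L, the symmetric (L+1)×(L+1) matrix (e^{λ}/k)·D(λ) + (𝟙·z(λ)ᵀ + z(λ)·𝟙ᵀ) is negative definite. -/
/-!
Write `y ⬝ᵥ M y = c ∑ dᵢ yᵢ² + 2 S (W - S)` with `S = ∑ yᵢ`, `W = ∑ (i/λ) yᵢ` and `c = e^λ/k`.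
Since `2 S (W - S) ≤ W²/2` and, by Cauchy–Schwarz, `W² ≤ (L+1)(2/13)² ∑ yᵢ²` (as `i ≤ L ≤ 2λ/13`),
the rank-two part is dominated by the diagonal as soon as every `c dᵢ ≤ -δ` with
`(L+1)(2/13)² < 2δ`. As `i ↦ i!/λ^i` decreases for `i ≤ λ`, each `c dᵢ` is at most
`-(11/13) c L!/λ^L`, and `c L!/λ^L` grows exponentially in `L`: `λ^L ≤ (13/2)^L L! e^{2λ/13}`
gives `λ^L e^{-λ} / L! ≤ e^{2L - 11λ/13} ≤ e^{-3.5 L}`, while `k < e^{(L+1)/0.558}` and `1/0.558 < 3.5`.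
-/

open Real Finset Matrix Nat

theorem factorial_le_factorial_mul_pow {i n : ℕ} {lam : ℝ} (hin : i ≤ n) (hn : (n : ℝ) ≤ lam) :
    (n ! : ℝ) ≤ i ! * lam ^ (n - i) := by
  obtain ⟨j, rfl⟩ := Nat.exists_eq_add_of_le hin
  rw [← factorial_mul_ascFactorial, Nat.add_sub_cancel_left, cast_mul]
  gcongr
  calc ((i + 1).ascFactorial j : ℝ) ≤ ((i + j : ℕ) : ℝ) ^ j := by
        exact_mod_cast ascFactorial_le_pow_add i j
    _ ≤ lam ^ j := by gcongr

theorem factorial_div_pow_le_of_le {i n : ℕ} {lam : ℝ} (hin : i ≤ n) (hn : (n : ℝ) ≤ lam) :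
    (n ! : ℝ) / lam ^ n ≤ i ! / lam ^ i := by
  rcases Nat.eq_zero_or_pos n with rfl | hn0
  · obtain rfl : i = 0 := by omega
    rfl
  have hlam : 0 < lam := lt_of_lt_of_le (by exact_mod_cast hn0) hn
  rw [div_le_div_iff₀ (by positivity) (by positivity), ← Nat.sub_add_cancel hin, pow_add,
    Nat.sub_add_cancel hin, ← mul_assoc]
  gcongr
  exact factorial_le_factorial_mul_pow hin hn

theorem natCast_div_le_two_div_thirteen {i L : ℕ} {lam : ℝ} (hiL : i ≤ L)
    (hlam : 6.5 * L ≤ lam) : (i : ℝ) / lam ≤ 2 / 13 := by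
  have : (i : ℝ) ≤ L := by exact_mod_cast hiL
  exact div_le_of_le_mul₀ (le_trans (by positivity) hlam) (by norm_num) (by linarith)

theorem sub_one_mul_factorial_div_pow_le {i L : ℕ} {lam : ℝ} (hiL : i ≤ L)
    (hlam : 6.5 * L ≤ lam) :
    ((i : ℝ) / lam - 1) * i ! / lam ^ i ≤ -(11 / 13 * (L ! / lam ^ L)) := by
  have hfact : (L ! : ℝ) / lam ^ L ≤ i ! / lam ^ i :=
    factorial_div_pow_le_of_le hiL (by linarith [(Nat.cast_nonneg L : (0 : ℝ) ≤ L)])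
  have hfact0 : (0 : ℝ) ≤ L ! / lam ^ L := by
    have : 0 ≤ lam := le_trans (by positivity) hlam
    positivity
  have := natCast_div_le_two_div_thirteen hiL hlam
  rw [mul_div_assoc]
  nlinarith

theorem sum_sq_natCast_div_le {L : ℕ} {lam : ℝ} (hlam : 6.5 * L ≤ lam) :
    ∑ i : Fin (L + 1), ((i : ℝ) / lam) ^ 2 ≤ (L + 1) * (2 / 13) ^ 2 := by
  have hlam0 : 0 ≤ lam := le_trans (by positivity) hlam
  calc ∑ i : Fin (L + 1), ((i : ℝ) / lam) ^ 2 ≤ ∑ _i : Fin (L + 1), (2 / 13 : ℝ) ^ 2 := by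
        refine sum_le_sum fun i _ => pow_le_pow_left₀ (by positivity) ?_ 2
        exact natCast_div_le_two_div_thirteen (Nat.lt_succ_iff.mp i.isLt) hlam
    _ = (L + 1) * (2 / 13) ^ 2 := by simp

-- `500 / 279 = 1 / 0.558`
theorem two_mul_succ_mul_pow_lt {L : ℕ} {k lam : ℝ}
    (hk : k < exp ((L + 1) * (500 / 279))) (hlam : 6.5 * L ≤ lam) :
    2 * (L + 1) * k * lam ^ L < 143 * exp lam * L ! := by
  have hlam0 : 0 ≤ lam := le_trans (by positivity) hlam
  have hsucc : (L : ℝ) + 1 ≤ exp L := add_one_le_exp _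
  have hpow : lam ^ L ≤ exp (2 * L) * (L ! * exp (2 * lam / 13)) := by
    have h := pow_div_factorial_le_exp (x := 2 * lam / 13) (by positivity) L
    rw [div_le_iff₀ (by positivity)] at h
    have h132 : (13 / 2 : ℝ) ^ L ≤ exp (2 * L) := by
      rw [mul_comm, exp_nat_mul]
      gcongr
      have := exp_one_gt_d9
      rw [show (2 : ℝ) = 1 + 1 by norm_num, exp_add]
      nlinarith
    calc lam ^ L = (13 / 2) ^ L * (2 * lam / 13) ^ L := by rw [← mul_pow]; ring_nf
      _ ≤ _ := by gcongr; linarith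
  have he2 : exp 2 < 71.5 := by
    have := exp_one_lt_d9
    rw [show (2 : ℝ) = 1 + 1 by norm_num, exp_add]
    nlinarith [exp_pos 1]
  calc 2 * (L + 1) * k * lam ^ L
      ≤ 2 * (L + 1) * exp ((L + 1) * (500 / 279)) * lam ^ L := by gcongr
    _ ≤ 2 * exp L * exp ((L + 1) * (500 / 279)) * (exp (2 * L) * (L ! * exp (2 * lam / 13))) := by
        gcongr
    _ = 2 * exp (L + (L + 1) * (500 / 279) + 2 * L + 2 * lam / 13) * L ! := by
        simp only [exp_add]; ring
    _ ≤ 2 * exp (2 + lam) * L ! := by gcongr 2 * exp ?_ * _; linarith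
    _ < 143 * exp lam * L ! := by
        rw [exp_add, ← mul_assoc]
        gcongr
        linarith

theorem dotProduct_diagonal_add_vecMulVec_mulVec_neg {ι : Type*} [Fintype ι] [DecidableEq ι]
    {d z y : ι → ℝ} {δ : ℝ} (hd : ∀ i, d i ≤ -δ) (hz : ∑ i, (z i + 1) ^ 2 < 2 * δ)
    (hy : y ≠ 0) :
    y ⬝ᵥ ((diagonal d + (vecMulVec 1 z + vecMulVec z 1)) *ᵥ y) < 0 := by
  set P := ∑ i, y i ^ 2
  set S := ∑ i, y i
  set T := ∑ i, z i * y i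
  have hquad : y ⬝ᵥ ((diagonal d + (vecMulVec 1 z + vecMulVec z 1)) *ᵥ y)
      = ∑ i, d i * y i ^ 2 + 2 * S * T := by
    simp only [add_mulVec, dotProduct_add, vecMulVec_mulVec, op_smul_eq_smul, dotProduct_smul,
      smul_eq_mul]
    simp only [dotProduct, mulVec_diagonal, Pi.one_apply, mul_one, one_mul]
    rw [sum_congr rfl fun i _ => mul_comm (y i) (z i)]
    rw [sum_congr rfl fun i _ => (by ring : y i * (d i * y i) = d i * y i ^ 2)]
    ring
  have hP : 0 < P := by
    obtain ⟨i, hi : y i ≠ 0⟩ := Function.ne_iff.mp hy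
    exact lt_of_lt_of_le (by positivity) (single_le_sum (fun j _ => sq_nonneg (y j)) (mem_univ i))
  have hdiag : ∑ i, d i * y i ^ 2 ≤ -δ * P := by
    rw [mul_sum]
    gcongr with i
    exact hd i
  have hcs : (T + S) ^ 2 ≤ (∑ i, (z i + 1) ^ 2) * P := by
    have : T + S = ∑ i, (z i + 1) * y i := by simp only [T, S, add_mul, one_mul, sum_add_distrib]
    exact this ▸ sum_mul_sq_le_sq_mul_sq _ _ _
  have := mul_lt_mul_of_pos_right hz hP
  rw [hquad]
  nlinarith [sq_nonneg (S - T)]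

theorem stmt_2 (k : ℝ) (hk : 0 < k) (hlog : 1 ≤ 0.558 * Real.log k)
    (L : ℕ) (hL : L = ⌊0.558 * Real.log k⌋₊)
    (lam : ℝ) (hlam : 6.5 * L ≤ lam)
    (D : Matrix (Fin (L + 1)) (Fin (L + 1)) ℝ)
    (hD : D = Matrix.diagonal (fun i : Fin (L + 1) =>
      ((i : ℝ) / lam - 1) * (Nat.factorial (i : ℕ) : ℝ) / lam ^ (i : ℕ)))
    (z : Fin (L + 1) → ℝ) (hz : z = fun i : Fin (L + 1) => (i : ℝ) / lam - 1)
    (M : Matrix (Fin (L + 1)) (Fin (L + 1)) ℝ)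
    (hM : M = (Real.exp lam / k) • D +
      (Matrix.vecMulVec (fun _ : Fin (L + 1) => (1 : ℝ)) z +
       Matrix.vecMulVec z (fun _ : Fin (L + 1) => (1 : ℝ)))) :
    M.IsSymm ∧ ∀ y : Fin (L + 1) → ℝ, y ≠ 0 → y ⬝ᵥ (M *ᵥ y) < 0 := by
  subst hM hD hz
  have hL1 : 1 ≤ L := hL ▸ Nat.le_floor (by exact_mod_cast hlog)
  have hlam0 : 0 < lam := lt_of_lt_of_le (by positivity) hlam
  have hkL : k < exp ((L + 1) * (500 / 279)) := by
    have := hL ▸ Nat.lt_floor_add_one (0.558 * Real.log k)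
    rw [← exp_log hk]
    gcongr
    linarith
  refine ⟨((isSymm_diagonal _).smul _).add ?_, fun y hy => ?_⟩
  · simpa using isSymm_add_transpose_self (vecMulVec (fun _ : Fin (L + 1) => (1 : ℝ)) _)
  rw [← diagonal_smul]
  refine dotProduct_diagonal_add_vecMulVec_mulVec_neg
    (δ := exp lam / k * (11 / 13 * (L ! / lam ^ L))) (fun i => ?_) ?_ hy
  · rw [Pi.smul_apply, smul_eq_mul, ← mul_neg]
    exact mul_le_mul_of_nonneg_left
      (sub_one_mul_factorial_div_pow_le (Nat.lt_succ_iff.mp i.isLt) hlam) (by positivity)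
  · have key := two_mul_succ_mul_pow_lt hkL hlam
    simp only [sub_add_cancel]
    refine (sum_sq_natCast_div_le hlam).trans_lt ?_
    rw [show 2 * (exp lam / k * (11 / 13 * (L ! / lam ^ L)))
      = 22 * exp lam * L ! / (13 * (k * lam ^ L)) by field_simp; norm_num,
      lt_div_iff₀ (by positivity)]
    linarith
end

section
/- Let L be a natural number and let λ > L be real. Let z ∈ ℝ^{L+1} have entries z_i = i/λ − 1 for i = 0,…,L, and let 𝟙 ∈ ℝ^{L+1} be the all-ones vector. Then for every y ∈ ℝ^{L+1}, yᵀ(𝟙zᵀ + z𝟙ᵀ)y ≤ (L(L+1)/(2λ))·‖y‖²; equivalently, every eigenvalue of the symmetric matrix 𝟙zᵀ + z𝟙ᵀ is at most L(L+1)/(2λ). -/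
/-! Write `z = w - 𝟙` with `w i = i / λ ∈ [0, 1)`. With `S = 𝟙ᵀy` and `T = wᵀy` the quadratic form
equals `2S(T - S) = T²/2 - (2S - T)²/2 ≤ T²/2`, and Cauchy–Schwarz with `w i ^ 2 ≤ w i` bounds
`T²` by `(∑ i, w i) ‖y‖² = L(L+1)/(2λ) ‖y‖²`. -/

open Finset

section QuadraticForm

variable {ι : Type*} [Fintype ι]

lemma sum_sum_mul_add_mul_eq (z y : ι → ℝ) :
    ∑ i, ∑ j, y i * (z j + z i) * y j = 2 * (∑ i, y i) * ∑ i, z i * y i := by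
  have hsplit : ∀ i j, y i * (z j + z i) * y j = y i * (z j * y j) + z i * y i * y j :=
    fun i j => by ring
  simp only [hsplit, sum_add_distrib, ← mul_sum, ← sum_mul]
  ring

lemma sum_sum_mul_sub_one_add_sub_one_le (w y : ι → ℝ) :
    ∑ i, ∑ j, y i * ((w j - 1) + (w i - 1)) * y j ≤
      (∑ i, w i ^ 2) / 2 * ∑ i, y i ^ 2 := by
  set S := ∑ i, y i
  set T := ∑ i, w i * y i
  have hZ : ∑ i, (w i - 1) * y i = T - S := by
    simp only [sub_mul, one_mul, sum_sub_distrib, T, S]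
  have hCS : T ^ 2 ≤ (∑ i, w i ^ 2) * ∑ i, y i ^ 2 := sum_mul_sq_le_sq_mul_sq _ _ _
  rw [sum_sum_mul_add_mul_eq (fun i => w i - 1), hZ]
  nlinarith [sq_nonneg (2 * S - T)]

lemma sum_sq_le_sum_of_mem_Icc {w : ι → ℝ} (hw : ∀ i, w i ∈ Set.Icc (0 : ℝ) 1) :
    ∑ i, w i ^ 2 ≤ ∑ i, w i :=
  sum_le_sum fun i _ => by nlinarith [(hw i).1, (hw i).2]

end QuadraticForm

lemma sum_fin_natCast (L : ℕ) : ∑ i : Fin (L + 1), (i : ℝ) = L * (L + 1) / 2 := by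
  rw [Fin.sum_univ_eq_sum_range (fun i => (i : ℝ)), ← Nat.cast_sum,
    eq_div_iff two_ne_zero]
  have h := sum_range_id_mul_two (L + 1)
  rw [Nat.add_sub_cancel, mul_comm (L + 1)] at h
  exact_mod_cast h

theorem stmt_3 (L : ℕ) (lam : ℝ) (hlam : (L : ℝ) < lam)
    (z : Fin (L + 1) → ℝ) (hz : z = fun i : Fin (L + 1) => (i : ℝ) / lam - 1)
    (y : Fin (L + 1) → ℝ) :
    ∑ i : Fin (L + 1), ∑ j : Fin (L + 1), y i * (z j + z i) * y j ≤
      ((L : ℝ) * (L + 1) / (2 * lam)) * ∑ i : Fin (L + 1), (y i) ^ 2 := by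
  subst hz
  have hlam0 : 0 < lam := (Nat.cast_nonneg L).trans_lt hlam
  have hw : ∀ i : Fin (L + 1), (i : ℝ) / lam ∈ Set.Icc (0 : ℝ) 1 := fun i =>
    ⟨by positivity,
      (div_le_one hlam0).2 <| (Nat.cast_le.2 (Nat.lt_succ_iff.1 i.isLt)).trans hlam.le⟩
  have hsum : ∑ i : Fin (L + 1), (i : ℝ) / lam = L * (L + 1) / (2 * lam) := by
    rw [← sum_div, sum_fin_natCast, div_div]
  have hN : 0 ≤ ∑ i : Fin (L + 1), y i ^ 2 := sum_nonneg fun i _ => sq_nonneg _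
  have hpos : 0 ≤ (L : ℝ) * (L + 1) / (2 * lam) := by positivity
  calc _ ≤ (∑ i : Fin (L + 1), ((i : ℝ) / lam) ^ 2) / 2 * ∑ i, y i ^ 2 :=
        sum_sum_mul_sub_one_add_sub_one_le _ y
    _ ≤ (L * (L + 1) / (2 * lam)) / 2 * ∑ i, y i ^ 2 := by
        rw [← hsum]; gcongr ?_ / 2 * _; exact sum_sq_le_sum_of_mem_Icc hw
    _ ≤ _ := by nlinarith
end

section
/- Let u, v ∈ ℝ^n and suppose every entry of the symmetric matrix A = u·vᵀ + v·uᵀ is nonnegative. Then every eigenvalue of A is at least trace(A) − max_{1≤i≤n} ∑_{1≤j≤n} A_{ij}. -/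
/-!
On `span {u, v}` the matrix `A = u vᵀ + v uᵀ` has the eigenvalues `⟪u, v⟫ ± ‖u‖ ‖v‖`, with
eigenvectors `‖v‖ u ± ‖u‖ v`, and it vanishes on the orthogonal complement; in particular
`trace A = 2 ⟪u, v⟫` is the sum of these two eigenvalues. The smaller one bounds every Rayleigh
quotient `xᵀ A x / ‖x‖² = 2 ⟪u, x⟫ ⟪v, x⟫ / ‖x‖²` from below (Cauchy–Schwarz against
`‖v‖ u - ‖u‖ v`), and the larger one is at most the maximal row sum by Gershgorin's theorem,
since `A` is entrywise nonnegative.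
-/

open Finset Matrix
open scoped RealInnerProductSpace

section InnerProductSpace

variable {E : Type*} [NormedAddCommGroup E] [InnerProductSpace ℝ E]

theorem inner_sub_norm_mul_norm_mul_norm_sq_le (u v x : E) :
    (⟪u, v⟫ - ‖u‖ * ‖v‖) * ‖x‖ ^ 2 ≤ 2 * (⟪u, x⟫ * ⟪v, x⟫) := by
  rcases eq_or_ne u 0 with rfl | hu
  · simp
  rcases eq_or_ne v 0 with rfl | hv
  · simp
  set w := ‖v‖ • u - ‖u‖ • v
  have hw : ‖w‖ ^ 2 = 2 * (‖u‖ * ‖v‖) * (‖u‖ * ‖v‖ - ⟪u, v⟫) := by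
    rw [norm_sub_sq_real, norm_smul, norm_smul, real_inner_smul_left, real_inner_smul_right]
    simp only [norm_norm]
    ring
  have hwx : ⟪w, x⟫ = ‖v‖ * ⟪u, x⟫ - ‖u‖ * ⟪v, x⟫ := by
    rw [inner_sub_left, real_inner_smul_left, real_inner_smul_left]
  have cauchySchwarz : ⟪w, x⟫ ^ 2 ≤ ‖w‖ ^ 2 * ‖x‖ ^ 2 := by
    rw [← mul_pow, ← sq_abs]
    exact pow_le_pow_left₀ (abs_nonneg _) (abs_real_inner_le_norm w x) 2
  have hst : 0 < 2 * (‖u‖ * ‖v‖) := by positivity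
  rw [hwx, hw] at cauchySchwarz
  refine le_of_mul_le_mul_left ?_ hst
  -- `4 ‖u‖ ‖v‖ ⟪u, x⟫ ⟪v, x⟫ = (‖v‖ ⟪u, x⟫ + ‖u‖ ⟪v, x⟫)² - ⟪w, x⟫²`
  linear_combination cauchySchwarz + sq_nonneg (‖v‖ * ⟪u, x⟫ + ‖u‖ * ⟪v, x⟫)

theorem inner_norm_smul_add_norm_smul (u v : E) :
    ⟪v, ‖v‖ • u + ‖u‖ • v⟫ = ‖v‖ * (⟪u, v⟫ + ‖u‖ * ‖v‖) := by
  rw [inner_add_right, real_inner_smul_right, real_inner_smul_right,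
    real_inner_self_eq_norm_sq, real_inner_comm]
  ring

theorem inner_add_norm_mul_norm_eq_zero {u v : E} (h : ‖v‖ • u + ‖u‖ • v = 0) :
    ⟪u, v⟫ + ‖u‖ * ‖v‖ = 0 := by
  rcases eq_or_ne v 0 with rfl | hv
  · simp
  have := inner_norm_smul_add_norm_smul u v
  rw [h, inner_zero_right, eq_comm] at this
  exact (mul_eq_zero.1 this).resolve_left (norm_ne_zero_iff.2 hv)

end InnerProductSpace

namespace Matrix

theorem le_iSup_sum_of_hasEigenvalue {ι : Type*} [Fintype ι] [DecidableEq ι]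
    {A : Matrix ι ι ℝ} (hA : ∀ i j, 0 ≤ A i j) {μ : ℝ}
    (hμ : Module.End.HasEigenvalue (toLin' A) μ) : μ ≤ ⨆ i, ∑ j, A i j := by
  obtain ⟨k, hk⟩ := eigenvalue_mem_ball hμ
  simp only [Metric.mem_closedBall, Real.dist_eq, Real.norm_of_nonneg (hA _ _)] at hk
  calc μ ≤ A k k + ∑ j ∈ univ.erase k, A k j := by linarith [le_abs_self (μ - A k k)]
    _ = ∑ j, A k j := add_sum_erase _ _ (mem_univ k)
    _ ≤ ⨆ i, ∑ j, A i j := le_ciSup (f := fun i => ∑ j, A i j) (Finite.bddAbove_range _) k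

section vecMulVec

variable {ι α : Type*} [Fintype ι] [CommSemiring α] (u v : ι → α)

theorem trace_vecMulVec_add_vecMulVec :
    trace (vecMulVec u v + vecMulVec v u) = 2 * (u ⬝ᵥ v) := by
  rw [trace_add, trace_vecMulVec, trace_vecMulVec, dotProduct_comm v u, two_mul]

theorem vecMulVec_add_vecMulVec_mulVec (x : ι → α) :
    (vecMulVec u v + vecMulVec v u) *ᵥ x = (v ⬝ᵥ x) • u + (u ⬝ᵥ x) • v := by
  simp only [add_mulVec, vecMulVec_mulVec, op_smul_eq_smul]

theorem dotProduct_vecMulVec_add_vecMulVec_mulVec (x : ι → α) :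
    x ⬝ᵥ (vecMulVec u v + vecMulVec v u) *ᵥ x = 2 * ((u ⬝ᵥ x) * (v ⬝ᵥ x)) := by
  rw [vecMulVec_add_vecMulVec_mulVec, dotProduct_add, dotProduct_smul, dotProduct_smul,
    smul_eq_mul, smul_eq_mul, dotProduct_comm x u, dotProduct_comm x v]
  ring

end vecMulVec

section rankTwo

variable {ι : Type*} [Fintype ι] (u v : ι → ℝ)

theorem dotProduct_eq_inner_toLp (x y : ι → ℝ) :
    x ⬝ᵥ y = ⟪(WithLp.toLp 2 x : EuclideanSpace ℝ ι), WithLp.toLp 2 y⟫ := by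
  rw [EuclideanSpace.inner_toLp_toLp, star_trivial, dotProduct_comm]

theorem dotProduct_sub_norm_mul_norm_le_of_mulVec_eq_smul {x : ι → ℝ} {μ : ℝ} (hx : x ≠ 0)
    (h : (vecMulVec u v + vecMulVec v u) *ᵥ x = μ • x) :
    u ⬝ᵥ v - ‖WithLp.toLp 2 u‖ * ‖WithLp.toLp 2 v‖ ≤ μ := by
  have hquad := dotProduct_vecMulVec_add_vecMulVec_mulVec u v x
  rw [h, dotProduct_smul, smul_eq_mul] at hquad
  have hpos : 0 < x ⬝ᵥ x := by simpa using dotProduct_self_star_pos_iff.2 hx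
  have hlow := inner_sub_norm_mul_norm_mul_norm_sq_le (WithLp.toLp 2 u) (WithLp.toLp 2 v)
    (WithLp.toLp 2 x : EuclideanSpace ℝ ι)
  simp only [← real_inner_self_eq_norm_sq, ← dotProduct_eq_inner_toLp, ← hquad] at hlow
  exact le_of_mul_le_mul_right hlow hpos

theorem vecMulVec_add_vecMulVec_mulVec_norm_smul_add_norm_smul :
    (vecMulVec u v + vecMulVec v u) *ᵥ (‖WithLp.toLp 2 v‖ • u + ‖WithLp.toLp 2 u‖ • v) =
      (u ⬝ᵥ v + ‖WithLp.toLp 2 u‖ * ‖WithLp.toLp 2 v‖) •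
        (‖WithLp.toLp 2 v‖ • u + ‖WithLp.toLp 2 u‖ • v) := by
  have hv :=
    inner_norm_smul_add_norm_smul (WithLp.toLp 2 u : EuclideanSpace ℝ ι) (WithLp.toLp 2 v)
  have hu :=
    inner_norm_smul_add_norm_smul (WithLp.toLp 2 v : EuclideanSpace ℝ ι) (WithLp.toLp 2 u)
  rw [add_comm (_ • _)] at hu
  simp only [← WithLp.toLp_smul, ← WithLp.toLp_add, ← dotProduct_eq_inner_toLp] at hu hv
  rw [dotProduct_comm v u] at hu
  rw [vecMulVec_add_vecMulVec_mulVec, hu, hv]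
  module

theorem dotProduct_add_norm_mul_norm_le_iSup_sum
    (hA : ∀ i j, 0 ≤ (vecMulVec u v + vecMulVec v u) i j) :
    u ⬝ᵥ v + ‖WithLp.toLp 2 u‖ * ‖WithLp.toLp 2 v‖ ≤
      ⨆ i, ∑ j, (vecMulVec u v + vecMulVec v u) i j := by
  classical
  by_cases hy : ‖WithLp.toLp 2 v‖ • u + ‖WithLp.toLp 2 u‖ • v = 0
  · have hy' : ‖WithLp.toLp 2 v‖ • (WithLp.toLp 2 u : EuclideanSpace ℝ ι) +
        ‖WithLp.toLp 2 u‖ • WithLp.toLp 2 v = 0 := by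
      rw [← WithLp.toLp_smul, ← WithLp.toLp_smul, ← WithLp.toLp_add, hy, WithLp.toLp_zero]
    rw [dotProduct_eq_inner_toLp, inner_add_norm_mul_norm_eq_zero hy']
    exact Real.iSup_nonneg fun i => sum_nonneg fun j _ => hA i j
  · refine le_iSup_sum_of_hasEigenvalue hA (Module.End.hasEigenvalue_of_hasEigenvector ⟨?_, hy⟩)
    rw [Module.End.mem_eigenspace_iff, toLin'_apply]
    exact vecMulVec_add_vecMulVec_mulVec_norm_smul_add_norm_smul u v

end rankTwo

end Matrix

theorem stmt_4 {n : ℕ} (u v : Fin n → ℝ)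
    (A : Matrix (Fin n) (Fin n) ℝ)
    (hA : A = Matrix.vecMulVec u v + Matrix.vecMulVec v u)
    (hnonneg : ∀ i j, 0 ≤ A i j)
    (mu : ℝ) (x : Fin n → ℝ) (hx : x ≠ 0) (heig : A *ᵥ x = mu • x) :
    A.trace - (⨆ i : Fin n, ∑ j : Fin n, A i j) ≤ mu := by
  subst hA
  have hmin := dotProduct_sub_norm_mul_norm_le_of_mulVec_eq_smul u v hx heig
  have hmax := dotProduct_add_norm_mul_norm_le_iSup_sum u v hnonneg
  rw [trace_vecMulVec_add_vecMulVec]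
  linarith
end

section
/- Let L ≥ 1 be a natural number and let λ ≥ 2L be real. Then for every i ∈ {0,1,…,L}, (i/λ − 1)·i!/λ^i ≤ −(1/2)·(L/(e·λ))^L. -/
/-!
Since `i ≤ L ≤ λ / 2`, the first factor `i / λ - 1` is at most `-1/2`. The second factor
`i! / λ^i` decreases in `i` as long as `i ≤ λ`, so it is at least `L! / λ^L`, and
`L! ≥ (L / e)^L` because `L^L / L!` is one term of the series of `e^L`.
-/

open Real

open scoped Nat

theorem div_exp_one_pow_le_factorial (n : ℕ) : ((n : ℝ) / exp 1) ^ n ≤ n ! := by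
  have hfac : (0 : ℝ) < n ! := by positivity
  have h := pow_div_factorial_le_exp _ n.cast_nonneg n
  rw [div_le_iff₀ hfac, ← exp_one_pow] at h
  rw [div_pow, div_le_iff₀ (by positivity)]
  linarith

theorem factorial_div_pow_antitone {lam : ℝ} {i j : ℕ} (hij : i ≤ j) (hj : (j : ℝ) ≤ lam) :
    (j ! : ℝ) / lam ^ j ≤ i ! / lam ^ i := by
  induction j, hij using Nat.le_induction with
  | base => rfl
  | succ n _ ih =>
    have hn : (n : ℝ) + 1 ≤ lam := by exact_mod_cast hj
    have hlam : 0 < lam := by linarith [(n.cast_nonneg : (0 : ℝ) ≤ n)]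
    calc ((n + 1) ! : ℝ) / lam ^ (n + 1) = n ! / lam ^ n * ((n + 1) / lam) := by
          push_cast [Nat.factorial_succ, pow_succ]; ring
      _ ≤ n ! / lam ^ n * 1 := by
          gcongr
          exact div_le_one_of_le₀ hn hlam.le
      _ ≤ i ! / lam ^ i := by rw [mul_one]; exact ih (by linarith)

theorem stmt_6_general (L : ℕ) (lam : ℝ) (hlam : 2 * (L : ℝ) ≤ lam)
    (i : ℕ) (hi : i ≤ L) :
    ((i : ℝ) / lam - 1) * (Nat.factorial i : ℝ) / lam ^ i ≤
      -(1 / 2) * ((L : ℝ) / (Real.exp 1 * lam)) ^ L := by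
  have hL : (0 : ℝ) ≤ L := L.cast_nonneg
  have hiL : (i : ℝ) ≤ L := by exact_mod_cast hi
  have hlam0 : 0 ≤ lam := by linarith
  have hfirst : (i : ℝ) / lam - 1 ≤ -(1 / 2) := by
    have : (i : ℝ) / lam ≤ 1 / 2 := div_le_of_le_mul₀ hlam0 (by norm_num) (by linarith)
    linarith
  have hsecond : ((L : ℝ) / (exp 1 * lam)) ^ L ≤ (i ! : ℝ) / lam ^ i :=
    calc ((L : ℝ) / (exp 1 * lam)) ^ L = ((L : ℝ) / exp 1) ^ L / lam ^ L := by
          rw [← div_div, div_pow]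
      _ ≤ L ! / lam ^ L := by gcongr; exact div_exp_one_pow_le_factorial L
      _ ≤ i ! / lam ^ i := factorial_div_pow_antitone hi (by linarith)
  rw [mul_div_assoc]
  calc ((i : ℝ) / lam - 1) * (i ! / lam ^ i) ≤ -(1 / 2) * (i ! / lam ^ i) := by
        gcongr
    _ ≤ -(1 / 2) * ((L : ℝ) / (exp 1 * lam)) ^ L := by linarith

theorem stmt_6 (L : ℕ) (hL : 1 ≤ L) (lam : ℝ) (hlam : 2 * (L : ℝ) ≤ lam)
    (i : ℕ) (hi : i ≤ L) :
    ((i : ℝ) / lam - 1) * (Nat.factorial i : ℝ) / lam ^ i ≤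
      -(1 / 2) * ((L : ℝ) / (Real.exp 1 * lam)) ^ L :=
  stmt_6_general L lam hlam i hi
end

section
/- Let L ≥ 1 be a natural number, let k > 0 be real with ln k ≤ (L+1)/0.558, and let λ ≥ 6.5·L be real. Then L(L+1)/(2λ) < (e^{λ}/(2k))·(L/(e·λ))^L. -/
open Real Finset

set_option maxHeartbeats 800000 in
theorem stmt_7 (L : ℕ) (hL : 1 ≤ L) (k : ℝ) (hk : 0 < k)
    (hlog : Real.log k ≤ ((L : ℝ) + 1) / 0.558)
    (lam : ℝ) (hlam : 6.5 * (L : ℝ) ≤ lam) :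
    (L : ℝ) * ((L : ℝ) + 1) / (2 * lam) <
      (Real.exp lam / (2 * k)) * ((L : ℝ) / (Real.exp 1 * lam)) ^ L := by
  have hn : (1:ℝ) ≤ (L:ℝ) := by exact_mod_cast hL
  have hn0 : (0:ℝ) < (L:ℝ) := by linarith
  have hlampos : (0:ℝ) < lam := by nlinarith
  have h2k : (0:ℝ) < 2*k := by linarith
  have h2lam : (0:ℝ) < 2*lam := by linarith
  have hE : (0:ℝ) < Real.exp 1 * lam := by positivity
  have hc : (0:ℝ) ≤ (L:ℝ) - 1 := by linarith
  have h65 : (0:ℝ) < 6.5 * (L:ℝ) := by linarith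
  have hLHS : (L : ℝ) * ((L : ℝ) + 1) / (2 * lam)
      = Real.exp (Real.log L + Real.log ((L:ℝ)+1) - Real.log (2*lam)) := by
    rw [Real.exp_sub, Real.exp_add, Real.exp_log hn0,
      Real.exp_log (by linarith : (0:ℝ) < (L:ℝ)+1), Real.exp_log h2lam]
  have hq : (0:ℝ) < (L:ℝ) / (Real.exp 1 * lam) := by positivity
  have hRHS : (Real.exp lam / (2 * k)) * ((L : ℝ) / (Real.exp 1 * lam)) ^ L
      = Real.exp ((lam - Real.log (2*k)) + (L:ℝ) * (Real.log L - 1 - Real.log lam)) := by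
    rw [Real.exp_add, Real.exp_sub, Real.exp_log h2k]
    congr 1
    have h : Real.log L - 1 - Real.log lam = Real.log ((L:ℝ) / (Real.exp 1 * lam)) := by
      rw [Real.log_div (ne_of_gt hn0) (ne_of_gt hE),
        Real.log_mul (Real.exp_ne_zero 1) (ne_of_gt hlampos), Real.log_exp]
      ring
    rw [h, Real.exp_nat_mul, Real.exp_log hq]
  rw [hLHS, hRHS]
  apply Real.exp_lt_exp.mpr
  have hlogk : Real.log k ≤ 1.8 * ((L:ℝ)+1) := by
    have hd : ((L:ℝ)+1)/0.558 ≤ 1.8*((L:ℝ)+1) := by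
      rw [div_le_iff₀ (by norm_num)]
      nlinarith
    linarith
  have hlogL1 : Real.log ((L:ℝ)+1) ≤ (L:ℝ) := by
    rw [Real.log_le_iff_le_exp (by linarith)]
    linarith [Real.add_one_le_exp (L:ℝ)]
  have hexp2 : Real.exp 2 = Real.exp 1 * Real.exp 1 := by
    rw [← Real.exp_add]; norm_num
  have hlog65 : Real.log 6.5 ≤ 2 := by
    rw [show (2:ℝ) = Real.log (Real.exp 2) by rw [Real.log_exp]]
    apply Real.log_le_log (by norm_num)
    nlinarith [Real.exp_one_gt_d9]
  have hloglam : Real.log lam ≤ Real.log 6.5 + Real.log (L:ℝ)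
      + (lam - 6.5*(L:ℝ))/(6.5*(L:ℝ)) := by
    have h1 : Real.log (lam / (6.5*(L:ℝ))) ≤ lam/(6.5*(L:ℝ)) - 1 :=
      Real.log_le_sub_one_of_pos (by positivity)
    rw [Real.log_div (ne_of_gt hlampos) (ne_of_gt h65),
      Real.log_mul (by norm_num) (ne_of_gt hn0)] at h1
    have h2 : lam/(6.5*(L:ℝ)) - 1 = (lam - 6.5*(L:ℝ))/(6.5*(L:ℝ)) := by
      field_simp
    linarith [h2 ▸ h1]
  have key : ((L:ℝ)-1) * ((lam - 6.5*(L:ℝ))/(6.5*(L:ℝ))) ≤ lam - 6.5*(L:ℝ) := by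
    rw [mul_comm, div_mul_eq_mul_div, div_le_iff₀ h65]
    nlinarith [mul_le_mul_of_nonneg_left (show (L:ℝ)-1 ≤ 6.5*(L:ℝ) by linarith)
      (show (0:ℝ) ≤ lam - 6.5*(L:ℝ) by linarith)]
  have A := mul_le_mul_of_nonneg_left hloglam hc
  have B := mul_le_mul_of_nonneg_left hlog65 hc
  have hlog2lam : Real.log (2*lam) = Real.log 2 + Real.log lam :=
    Real.log_mul (by norm_num) (ne_of_gt hlampos)
  have hlog2k : Real.log (2*k) = Real.log 2 + Real.log k :=
    Real.log_mul (by norm_num) (ne_of_gt hk)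
  rw [hlog2lam, hlog2k]
  nlinarith [A, B, key, hlogk, hlogL1, hn]
end

section
/- Let λ > 0 and η > 0 be real, let L be a natural number, and let a = (a_0,…,a_L) ∈ ℝ^{L+1}. Then ∑_{l=0}^{L} ∑_{h=0}^{∞} (λ^h/h!)·e^{−λ}·((η h)^l/l!)·e^{−η h}·a_l·l! = e^{−λ(1−e^{−η})}·∑_{l=0}^{L} a_l·η^l·T_l(λ·e^{−η}), where all series converge absolutely. (Probabilistically: if N ∼ Poisson(λ) and, conditionally on N = h, N′ ∼ Poisson(η h), then the left side equals 𝔼[g_L(N′) − 1] for the estimator function g_L with g_L(j) = a_j·j! + 1 for j ≤ L and g_L(j) = 1 otherwise.) -/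
open Real Finset

/-- Stirling numbers of the second kind: the number of partitions of an `n`-element set
into `r` nonempty blocks, via the standard recurrence. -/
def stirling2 : ℕ → ℕ → ℕ
  | 0, 0 => 1
  | 0, _ + 1 => 0
  | _ + 1, 0 => 0
  | n + 1, r + 1 => (r + 1) * stirling2 n (r + 1) + stirling2 n r

/-- The Touchard (Bell) polynomial `T_l(x) = ∑_{r=0}^{l} S(l,r) x^r`. -/
noncomputable def touchard (l : ℕ) (x : ℝ) : ℝ :=
  ∑ r ∈ Finset.range (l + 1), (stirling2 l r : ℝ) * x ^ r

/-! Writing `h ^ l = ∑ r, S(l, r) · h(h-1)⋯(h-r+1)` and using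
`∑ₕ xʰ h(h-1)⋯(h-r+1) / h! = xʳ eˣ` gives Dobinski's formula `∑ₕ xʰ hˡ / h! = eˣ T_l(x)`.
With `e^{-ηh} (ηh)ˡ = ηˡ (e^{-η})ʰ hˡ`, the inner series of the bias is `e^{-λ} aₗ ηˡ` times
Dobinski's series at `x = λ e^{-η}`, which sums to `e^{-λ(1 - e^{-η})} aₗ ηˡ T_l(λ e^{-η})`. -/

theorem stirling2_eq_stirlingSecond : stirling2 = Nat.stirlingSecond := by
  funext n r
  induction n generalizing r with
  | zero => cases r <;> rfl
  | succ n ih => cases r <;> simp only [stirling2, Nat.stirlingSecond, ih]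

theorem Nat.mul_descFactorial (n r : ℕ) :
    n * n.descFactorial r = n.descFactorial (r + 1) + r * n.descFactorial r := by
  rcases lt_or_ge n r with hnr | hrn
  · simp [Nat.descFactorial_eq_zero_iff_lt.mpr hnr]
  · rw [Nat.descFactorial_succ, ← add_mul, Nat.sub_add_cancel hrn]

theorem Nat.pow_eq_sum_stirlingSecond_mul_descFactorial (n : ℕ) : ∀ l : ℕ,
    n ^ l = ∑ r ∈ range (l + 1), stirlingSecond l r * n.descFactorial r
  | 0 => by simp
  | l + 1 => by
    -- `f` vanishes at `r = 0` and at `r = l + 1`, so shifting the index keeps its sum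
    set f : ℕ → ℕ := fun r => r * stirlingSecond l r * n.descFactorial r
    have hshift : ∑ r ∈ range (l + 1), f r = ∑ r ∈ range (l + 1), f (r + 1) := by
      have hlast : f (l + 1) = 0 := by simp [f, stirlingSecond_eq_zero_of_lt l.lt_succ_self]
      rw [← add_zero (∑ r ∈ range (l + 1), f r), ← hlast, ← sum_range_succ, sum_range_succ']
      simp [f]
    calc n ^ (l + 1)
        = ∑ r ∈ range (l + 1), stirlingSecond l r * (n * n.descFactorial r) := by
          rw [pow_succ', Nat.pow_eq_sum_stirlingSecond_mul_descFactorial n l, mul_sum]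
          exact sum_congr rfl fun r _ => by ring
      _ = ∑ r ∈ range (l + 1), stirlingSecond l r * n.descFactorial (r + 1)
            + ∑ r ∈ range (l + 1), f r := by
          rw [← sum_add_distrib]
          exact sum_congr rfl fun r _ => by rw [Nat.mul_descFactorial]; ring
      _ = ∑ r ∈ range (l + 2), stirlingSecond (l + 1) r * n.descFactorial r := by
          rw [hshift, ← sum_add_distrib, sum_range_succ' _ (l + 1)]
          simp only [f, stirlingSecond_succ_succ, stirlingSecond_succ_zero, zero_mul, add_zero]
          exact sum_congr rfl fun r _ => by ring

theorem hasSum_pow_mul_descFactorial_div_factorial (x : ℝ) (r : ℕ) :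
    HasSum (fun n : ℕ => x ^ n * n.descFactorial r / n.factorial) (Real.exp x * x ^ r) := by
  have hvanish : ∀ n ∉ Set.range (· + r), x ^ n * n.descFactorial r / n.factorial = 0 := by
    intro n hn
    have hnr : n < r := by
      by_contra! h
      exact hn ⟨n - r, Nat.sub_add_cancel h⟩
    simp [Nat.descFactorial_eq_zero_iff_lt.mpr hnr]
  rw [← (add_left_injective r).hasSum_iff hvanish, mul_comm, Real.exp_eq_exp_ℝ]
  refine ((NormedSpace.expSeries_div_hasSum_exp x).mul_left (x ^ r)).congr_fun fun k => ?_
  have hfact : ((k + r).factorial : ℝ) = k.factorial * (k + r).descFactorial r := by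
    have := Nat.factorial_mul_descFactorial (Nat.le_add_left r k)
    rw [Nat.add_sub_cancel] at this
    exact_mod_cast this.symm
  simp only [Function.comp_apply, hfact, pow_add]
  field_simp

theorem hasSum_pow_mul_pow_div_factorial (x : ℝ) (l : ℕ) :
    HasSum (fun n : ℕ => x ^ n * (n : ℝ) ^ l / n.factorial) (Real.exp x * touchard l x) := by
  have hexpand : (fun n : ℕ => x ^ n * (n : ℝ) ^ l / n.factorial) = fun n =>
      ∑ r ∈ range (l + 1), (stirling2 l r : ℝ) * (x ^ n * n.descFactorial r / n.factorial) := by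
    funext n
    rw [stirling2_eq_stirlingSecond, ← Nat.cast_pow,
      Nat.pow_eq_sum_stirlingSecond_mul_descFactorial, Nat.cast_sum, mul_sum, sum_div]
    push_cast
    exact sum_congr rfl fun r _ => by ring
  rw [hexpand, touchard, mul_sum]
  refine hasSum_sum fun r _ => ?_
  rw [mul_left_comm]
  exact (hasSum_pow_mul_descFactorial_div_factorial x r).mul_left (stirling2 l r : ℝ)

theorem hasSum_poisson_repeat (lam eta c : ℝ) (l : ℕ) :
    HasSum (fun h : ℕ => lam ^ h / (Nat.factorial h : ℝ) * Real.exp (-lam) *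
        ((eta * h) ^ l / (Nat.factorial l : ℝ)) * Real.exp (-(eta * h)) *
        (c * (Nat.factorial l : ℝ)))
      (Real.exp (-lam * (1 - Real.exp (-eta))) *
        (c * eta ^ l * touchard l (lam * Real.exp (-eta)))) := by
  set x := lam * Real.exp (-eta)
  have hterm : ∀ h : ℕ, lam ^ h / (Nat.factorial h : ℝ) * Real.exp (-lam) *
        ((eta * h) ^ l / (Nat.factorial l : ℝ)) * Real.exp (-(eta * h)) *
        (c * (Nat.factorial l : ℝ))
      = Real.exp (-lam) * c * eta ^ l * (x ^ h * (h : ℝ) ^ l / h.factorial) := by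
    intro h
    rw [show -(eta * h) = h * -eta by ring, Real.exp_nat_mul, mul_pow, mul_pow]
    field_simp
  have hval : Real.exp (-lam * (1 - Real.exp (-eta))) * (c * eta ^ l * touchard l x)
      = Real.exp (-lam) * c * eta ^ l * (Real.exp x * touchard l x) := by
    rw [show -lam * (1 - Real.exp (-eta)) = -lam + x by ring, Real.exp_add]
    ring
  rw [hval]
  exact ((hasSum_pow_mul_pow_div_factorial x l).mul_left _).congr_fun hterm

theorem stmt_10_general (lam eta : ℝ)
    (L : ℕ) (a : Fin (L + 1) → ℝ) :
    (∀ l : Fin (L + 1), Summable (fun h : ℕ =>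
      |lam ^ h / (Nat.factorial h : ℝ) * Real.exp (-lam) *
        ((eta * h) ^ (l : ℕ) / (Nat.factorial (l : ℕ) : ℝ)) * Real.exp (-(eta * h)) *
        (a l * (Nat.factorial (l : ℕ) : ℝ))|)) ∧
    ∑ l : Fin (L + 1), ∑' h : ℕ,
        lam ^ h / (Nat.factorial h : ℝ) * Real.exp (-lam) *
          ((eta * h) ^ (l : ℕ) / (Nat.factorial (l : ℕ) : ℝ)) * Real.exp (-(eta * h)) *
          (a l * (Nat.factorial (l : ℕ) : ℝ)) =
      Real.exp (-lam * (1 - Real.exp (-eta))) *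
        ∑ l : Fin (L + 1), a l * eta ^ (l : ℕ) * touchard (l : ℕ) (lam * Real.exp (-eta)) := by
  have hsum := fun l : Fin (L + 1) => hasSum_poisson_repeat lam eta (a l) l
  refine ⟨fun l => (hsum l).summable.abs, ?_⟩
  simp_rw [(hsum _).tsum_eq, ← mul_sum]

theorem stmt_10 (lam eta : ℝ) (hlam : 0 < lam) (heta : 0 < eta)
    (L : ℕ) (a : Fin (L + 1) → ℝ) :
    (∀ l : Fin (L + 1), Summable (fun h : ℕ =>
      |lam ^ h / (Nat.factorial h : ℝ) * Real.exp (-lam) *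
        ((eta * h) ^ (l : ℕ) / (Nat.factorial (l : ℕ) : ℝ)) * Real.exp (-(eta * h)) *
        (a l * (Nat.factorial (l : ℕ) : ℝ))|)) ∧
    ∑ l : Fin (L + 1), ∑' h : ℕ,
        lam ^ h / (Nat.factorial h : ℝ) * Real.exp (-lam) *
          ((eta * h) ^ (l : ℕ) / (Nat.factorial (l : ℕ) : ℝ)) * Real.exp (-(eta * h)) *
          (a l * (Nat.factorial (l : ℕ) : ℝ)) =
      Real.exp (-lam * (1 - Real.exp (-eta))) *
        ∑ l : Fin (L + 1), a l * eta ^ (l : ℕ) * touchard (l : ℕ) (lam * Real.exp (-eta)) :=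
  stmt_10_general lam eta L a
end

section
/- Let K ⊆ ℝ be a nonempty compact set, let m be a natural number, and let f : K × ℝ^m → ℝ be continuous such that for each λ ∈ K the function x ↦ f(λ, x) is strictly convex on ℝ^m. Then the function F(x) := sup_{λ ∈ K} f(λ, x) is strictly convex on ℝ^m. -/
/-! Compactness of `K` and continuity in `λ` make every supremum finite and attained. If the
supremum at `z = a • x + b • y` is attained at `λ₀`, strict convexity of `f λ₀` alone gives
`F z = f λ₀ z < a f λ₀ x + b f λ₀ y ≤ a F x + b F y`. -/

open Set

theorem strictConvexOn_sSup_image_of_exists_eq {E ι : Type*} [AddCommGroup E] [Module ℝ E]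
    {s : Set E} {K : Set ι} {f : ι → E → ℝ} (hconv : ∀ i ∈ K, StrictConvexOn ℝ s (f i))
    (hbdd : ∀ x ∈ s, BddAbove ((f · x) '' K))
    (hattain : ∀ x ∈ s, ∃ i ∈ K, sSup ((f · x) '' K) = f i x) :
    StrictConvexOn ℝ s (fun x => sSup ((f · x) '' K)) := by
  have hs : Convex ℝ s := by
    obtain rfl | ⟨x, hx⟩ := s.eq_empty_or_nonempty
    · exact convex_empty
    · obtain ⟨i, hi, -⟩ := hattain x hx
      exact (hconv i hi).1
  refine ⟨hs, fun x hx y hy hxy a b ha hb hab => ?_⟩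
  obtain ⟨i, hi, hsup⟩ := hattain _ (hs hx hy ha.le hb.le hab)
  have hle : ∀ w ∈ s, f i w ≤ sSup ((f · w) '' K) := fun w hw =>
    le_csSup (hbdd w hw) (mem_image_of_mem _ hi)
  calc sSup ((f · (a • x + b • y)) '' K) = f i (a • x + b • y) := hsup
    _ < a • f i x + b • f i y := (hconv i hi).2 hx hy hxy ha hb hab
    _ ≤ a • sSup ((f · x) '' K) + b • sSup ((f · y) '' K) := by
      simp only [smul_eq_mul]
      gcongr
      exacts [hle x hx, hle y hy]

theorem strictConvexOn_sSup_image_of_isCompact {E ι : Type*} [AddCommGroup E] [Module ℝ E]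
    [TopologicalSpace ι] {s : Set E} {K : Set ι} (hKne : K.Nonempty) (hKcomp : IsCompact K)
    {f : ι → E → ℝ} (hcont : ∀ x ∈ s, ContinuousOn (f · x) K)
    (hconv : ∀ i ∈ K, StrictConvexOn ℝ s (f i)) :
    StrictConvexOn ℝ s (fun x => sSup ((f · x) '' K)) :=
  strictConvexOn_sSup_image_of_exists_eq hconv
    (fun x hx => (hKcomp.image_of_continuousOn (hcont x hx)).bddAbove)
    (fun x hx => hKcomp.exists_sSup_image_eq hKne (hcont x hx))

theorem stmt_14 (K : Set ℝ) (hKne : K.Nonempty) (hKcomp : IsCompact K)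
    (m : ℕ) (f : ℝ → (Fin m → ℝ) → ℝ)
    (hcont : ContinuousOn (fun p : ℝ × (Fin m → ℝ) => f p.1 p.2) (K ×ˢ Set.univ))
    (hconv : ∀ lam ∈ K, StrictConvexOn ℝ Set.univ (f lam)) :
    StrictConvexOn ℝ Set.univ (fun x : Fin m → ℝ => sSup ((fun lam => f lam x) '' K)) :=
  strictConvexOn_sSup_image_of_isCompact hKne hKcomp
    (fun x _ => hcont.comp (Continuous.prodMk_left x).continuousOn
      (fun _ hlam => ⟨hlam, mem_univ x⟩))
    hconv
end
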